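/- Let K be a number field of degree n ≥ 2 with integral basis {ω₁,…,ω_n} of 𝔬_K, let 𝐍_{K/ℚ}(s) := N_{K/ℚ}(s₁ω₁+⋯+s_nω_n), and let D² denote the discriminant of K (so D = det(σ_i(ω_j)) over the n embeddings σ_i of K). If p is a prime, t ≥ 0 an integer, and s ∈ ℤⁿ is such that p^t divides ∂𝐍_{K/ℚ}(s)/∂s_j for every j = 1,…,n, then p^{⌈tn/(n−1)⌉} divides D²·𝐍_{K/ℚ}(s). -/

import Mathlib

/-!
Over `ℂ`, `𝐍(s) = ∏ⱼ Lⱼ(s)` with `Lⱼ(s) = ∑ᵢ sᵢ σⱼ(ωᵢ)`, so the gradient of `𝐍` at `s` is `M P`,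
where `M = (σⱼ ωᵢ)` and `Pⱼ = ∏_{k ≠ j} Lₖ(s)`. Multiplying by the adjugate of `M`, each
`det M · Pⱼ` is `p^t` times an algebraic integer; taking the product over `j` gives
`p^{tn} ∣ (det M)ⁿ 𝐍(s)^{n-1}` among algebraic integers. Squaring and using `(det M)² = D²` yields
`p^{2tn} ∣ (D²)ⁿ 𝐍(s)^{2(n-1)}` in `ℤ`, and since `n ≤ 2(n-1)`, comparing `p`-adic valuations
gives `tn ≤ (n-1) (v_p(D²) + v_p(𝐍(s)))`.
-/

open NumberField MvPolynomial Matrix Finset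

local notation "𝔸" => integralClosure ℤ ℂ

theorem Finset.prod_univ_prod_erase {ι M : Type*} [Fintype ι] [DecidableEq ι] [CommMonoid M]
    (f : ι → M) : ∏ j, ∏ k ∈ univ.erase j, f k = (∏ k, f k) ^ (Fintype.card ι - 1) := by
  rw [prod_comm' (t' := univ) (s' := fun k => univ.erase k) (by simp [ne_comm]), ← prod_pow]
  simp [card_erase_of_mem]

theorem Derivation.leibniz_prod {R A M ι : Type*} [CommSemiring R] [CommSemiring A]
    [AddCommMonoid M] [Algebra R A] [Module A M] [Module R M] [DecidableEq ι]
    (D : Derivation R A M) (s : Finset ι) (f : ι → A) :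
    D (∏ i ∈ s, f i) = ∑ i ∈ s, (∏ j ∈ s.erase i, f j) • D (f i) := by
  induction s using Finset.induction_on with
  | empty => simp
  | insert a s ha ih =>
    rw [prod_insert ha, D.leibniz, ih, sum_insert ha, erase_insert ha, smul_sum, add_comm]
    congr 1
    refine sum_congr rfl fun i hi => ?_
    rw [erase_insert_of_ne (ne_of_mem_of_not_mem hi ha).symm,
      prod_insert fun h => ha (mem_of_mem_erase h), mul_smul]

namespace Matrix

variable {ι R : Type*} [Fintype ι] [DecidableEq ι] [CommRing R]

theorem dvd_det_mul_of_dvd_mulVec (M : Matrix ι ι R) {x : ι → R} {a : R}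
    (h : ∀ i, a ∣ (M *ᵥ x) i) (j : ι) : a ∣ M.det * x j := by
  have hadj : M.adjugate *ᵥ (M *ᵥ x) = M.det • x := by
    rw [mulVec_mulVec, adjugate_mul, smul_mulVec, one_mulVec]
  rw [← smul_eq_mul, ← Pi.smul_apply, ← hadj]
  exact dvd_sum fun i _ => dvd_mul_of_dvd_right (h i) _

theorem pow_card_dvd_det_pow_mul_prod_pow (M : Matrix ι ι R) {L : ι → R} {a : R}
    (h : ∀ i, a ∣ (M *ᵥ fun j => ∏ k ∈ univ.erase j, L k) i) :
    a ^ Fintype.card ι ∣ M.det ^ Fintype.card ι * (∏ k, L k) ^ (Fintype.card ι - 1) := by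
  rw [← prod_univ_prod_erase, ← card_univ, ← prod_const, ← prod_const, ← prod_mul_distrib]
  exact prod_dvd_prod_of_dvd _ _ fun j _ => M.dvd_det_mul_of_dvd_mulVec h j

end Matrix

namespace MvPolynomial

theorem map_intCast_eq_of_eval_eq {ι R : Type*} [CommRing R] [IsDomain R] [CharZero R]
    {F : MvPolynomial ι ℤ} {G : MvPolynomial ι R}
    (h : ∀ s : ι → ℤ, (eval s F : R) = eval (fun i => (s i : R)) G) :
    F.map (Int.castRingHom R) = G := by
  refine funext_set (fun _ => Set.range Int.cast)
    (fun _ => Set.infinite_range_of_injective Int.cast_injective) fun x hx => ?_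
  choose s hs using fun i => hx i trivial
  obtain rfl : (fun i => (s i : R)) = x := _root_.funext hs
  exact (map_eval (Int.castRingHom R) s F).symm.trans (h s)

variable {ι κ R : Type*} [Fintype ι] [Fintype κ] [CommRing R]

noncomputable def prodLinearForms (M : Matrix ι κ R) : MvPolynomial ι R :=
  ∏ j, ∑ i, C (M i j) * X i

theorem eval_prodLinearForms (M : Matrix ι κ R) (x : ι → R) :
    eval x (prodLinearForms M) = ∏ j, (x ᵥ* M) j := by
  simp [prodLinearForms, vecMul, dotProduct, mul_comm]

theorem eval_pderiv_prodLinearForms [DecidableEq ι] [DecidableEq κ] (M : Matrix ι κ R)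
    (x : ι → R) (i : ι) :
    eval x (pderiv i (prodLinearForms M)) =
      (M *ᵥ fun j => ∏ k ∈ univ.erase j, (x ᵥ* M) k) i := by
  have hlin : ∀ j, pderiv i (∑ l, C (M l j) * X l) = C (M i j) := fun j => by
    simp [pderiv_X, Pi.single_apply]
  simp only [prodLinearForms, Derivation.leibniz_prod, hlin, smul_eq_mul, map_sum, map_mul,
    map_prod, eval_C, eval_X, mulVec, dotProduct]
  simp only [vecMul, dotProduct, mul_comm]

end MvPolynomial

theorem Nat.ceil_div_pred_le {t n a c : ℕ} (h : t * n * 2 ≤ n * a + (n - 1) * 2 * c) :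
    ⌈(t * n : ℚ) / ((n : ℚ) - 1)⌉₊ ≤ a + c := by
  rcases le_or_gt n 1 with hn | hn
  -- for `n ≤ 1` the quotient is `0 / -1` or a division by zero, hence the ceiling is `0`
  · interval_cases n <;> simp
  have hmain : t * n ≤ (n - 1) * (a + c) := by
    have : n * a ≤ 2 * (n - 1) * a := Nat.mul_le_mul_right a (by omega)
    nlinarith
  rw [Nat.ceil_le, div_le_iff₀ (by rw [sub_pos]; exact_mod_cast hn)]
  have := (Nat.cast_le (α := ℚ)).mpr hmain
  push_cast [Nat.cast_sub hn.le] at this ⊢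
  linarith

theorem Int.pow_ceil_dvd_mul_of_sq_dvd {p : ℕ} (hp : p.Prime) {t n : ℕ} {d N : ℤ}
    (h : ((p : ℤ) ^ (t * n)) ^ 2 ∣ d ^ n * (N ^ (n - 1)) ^ 2) :
    (p : ℤ) ^ ⌈(t * n : ℚ) / ((n : ℚ) - 1)⌉₊ ∣ d * N := by
  have : Fact p.Prime := ⟨hp⟩
  rcases eq_or_ne d 0 with rfl | hd
  · simp
  rcases eq_or_ne N 0 with rfl | hN
  · simp
  rw [← Int.natAbs_dvd_natAbs] at h
  rw [← Int.dvd_natAbs, Int.natAbs_mul]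
  simp only [Int.natAbs_mul, Int.natAbs_pow, Int.natAbs_natCast, ← pow_mul] at h
  rw [padicValNat_dvd_iff_le (by positivity), padicValNat.mul (by positivity) (by positivity),
    padicValNat.pow, padicValNat.pow] at h
  refine Int.natCast_dvd_natCast.mpr ((pow_dvd_pow p (Nat.ceil_div_pred_le h)).trans ?_)
  rw [pow_add]
  exact mul_dvd_mul pow_padicValNat_dvd pow_padicValNat_dvd

theorem Int.dvd_of_cast_dvd_integralClosure {L : Type*} [Field L] [CharZero L] {a b : ℤ}
    (h : (a : integralClosure ℤ L) ∣ b) : a ∣ b := by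
  obtain ⟨z, hz⟩ := h
  replace hz : (b : L) = a * z := by simpa using congrArg Subtype.val hz
  rcases eq_or_ne a 0 with rfl | ha
  · exact ⟨0, by simpa using hz⟩
  have hq : IsIntegral ℤ ((b : ℚ) / a) := by
    refine IsIntegral.tower_bot (A := ℚ) (B := L) (algebraMap ℚ L).injective ?_
    rw [eq_ratCast, Rat.cast_div, Rat.cast_intCast, Rat.cast_intCast, hz,
      mul_div_cancel_left₀ _ (Int.cast_ne_zero.mpr ha)]
    exact z.2
  obtain ⟨m, hm⟩ := IsIntegrallyClosed.isIntegral_iff.mp hq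
  refine ⟨m, ?_⟩
  rw [eq_intCast, eq_div_iff (Int.cast_ne_zero.mpr ha)] at hm
  exact_mod_cast (hm.symm.trans (mul_comm _ _))

namespace NumberField

variable {K : Type*} [Field K] [NumberField K] {ι : Type*}

noncomputable def integralEmbeddingsMatrix (b : Module.Basis ι ℤ (𝓞 K))
    (e : ι ≃ (K →ₐ[ℚ] ℂ)) : Matrix ι ι 𝔸 :=
  Matrix.of fun i j =>
    ⟨e j (b i), (RingOfIntegers.isIntegral_coe (b i)).map ((e j).restrictScalars ℤ)⟩

theorem det_integralEmbeddingsMatrix_sq [Fintype ι] [DecidableEq ι]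
    (b : Module.Basis ι ℤ (𝓞 K)) (e : ι ≃ (K →ₐ[ℚ] ℂ)) :
    (integralEmbeddingsMatrix b e).det ^ 2 = (discr K : 𝔸) := by
  have hdet : ((integralEmbeddingsMatrix b e).det : ℂ) =
      (Algebra.embeddingsMatrixReindex ℚ ℂ (fun i => (b i : K)) e).det :=
    (𝔸).val.toRingHom.map_det _
  have hb : (fun i => (b i : K)) = b.localizationLocalization ℚ (nonZeroDivisors ℤ) K := by
    ext i; simp
  have hdisc : Algebra.discr ℚ (fun i => (b i : K)) = discr K := by
    rw [hb, Algebra.discr_localizationLocalization, discr_eq_discr, eq_intCast]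
  apply Subtype.val_injective
  push_cast
  rw [hdet, ← Algebra.discr_eq_det_embeddingsMatrixReindex_pow_two, hdisc, eq_ratCast,
    Rat.cast_intCast]

theorem intCast_norm_sum_smul [Fintype ι] (b : Module.Basis ι ℤ (𝓞 K))
    (e : ι ≃ (K →ₐ[ℚ] ℂ)) (s : ι → ℤ) :
    ((Algebra.norm ℤ (∑ i, s i • b i) : ℤ) : 𝔸) =
      ∏ j, ((fun i => (s i : 𝔸)) ᵥ* integralEmbeddingsMatrix b e) j := by
  apply Subtype.val_injective
  have hnorm : ((Algebra.norm ℤ (∑ i, s i • b i) : ℤ) : ℂ) =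
      algebraMap ℚ ℂ (Algebra.norm ℚ (∑ i, s i • (b i : K))) := by
    rw [← Rat.cast_intCast, Algebra.coe_norm_int, eq_ratCast]
    push_cast
    rfl
  push_cast
  rw [hnorm, Algebra.norm_eq_prod_embeddings, ← e.prod_comp]
  refine prod_congr rfl fun j _ => ?_
  simp [vecMul, dotProduct, integralEmbeddingsMatrix]

end NumberField

theorem prime_power_divides_discriminant_times_norm_general
    (K : Type) [Field K] [NumberField K]
    (n : ℕ) (hn : Module.finrank ℚ K = n)
    (b : Module.Basis (Fin n) ℤ (𝓞 K))
    (Nf : MvPolynomial (Fin n) ℤ)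
    (hNf : ∀ s : Fin n → ℤ,
      MvPolynomial.eval s Nf = Algebra.norm ℤ (∑ i, s i • b i))
    (p : ℕ) (hp : p.Prime) (t : ℕ) (s : Fin n → ℤ)
    (hdiv : ∀ j, (p : ℤ) ^ t ∣ MvPolynomial.eval s (MvPolynomial.pderiv j Nf)) :
    (p : ℤ) ^ (⌈(t * n : ℚ) / ((n : ℚ) - 1)⌉₊)
      ∣ NumberField.discr K * MvPolynomial.eval s Nf := by
  let e : Fin n ≃ (K →ₐ[ℚ] ℂ) :=
    Fintype.equivOfCardEq (by rw [AlgHom.card, hn, Fintype.card_fin])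
  set M := integralEmbeddingsMatrix b e
  set x : Fin n → 𝔸 := fun i => (s i : 𝔸)
  have hpoly : Nf.map (Int.castRingHom _) = prodLinearForms M :=
    map_intCast_eq_of_eval_eq fun s => by
      rw [hNf, intCast_norm_sum_smul b e, ← eval_prodLinearForms]
  have hgrad : ∀ i, (p : 𝔸) ^ t ∣ (M *ᵥ fun j => ∏ k ∈ univ.erase j, (x ᵥ* M) k) i := fun i => by
    rw [← eval_pderiv_prodLinearForms, ← hpoly, pderiv_map]
    convert map_dvd (Int.castRingHom 𝔸) (hdiv i) using 1
    · simp
    · exact (map_eval (Int.castRingHom 𝔸) s (pderiv i Nf)).symm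
  have hnorm : ∏ k, (x ᵥ* M) k = (eval s Nf : 𝔸) := by
    rw [hNf, intCast_norm_sum_smul]
  have hdisc : M.det ^ 2 = (discr K : 𝔸) := det_integralEmbeddingsMatrix_sq b e
  have hsq : ((p : 𝔸) ^ (t * n)) ^ 2 ∣
      (M.det ^ 2) ^ n * ((eval s Nf : 𝔸) ^ (n - 1)) ^ 2 := by
    have := pow_dvd_pow_of_dvd (M.pow_card_dvd_det_pow_mul_prod_pow hgrad) 2
    rw [Fintype.card_fin, hnorm] at this
    convert this using 1 <;> ring
  rw [hdisc] at hsq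
  refine Int.pow_ceil_dvd_mul_of_sq_dvd hp (Int.dvd_of_cast_dvd_integralClosure (L := ℂ) ?_)
  exact_mod_cast hsq

/-- The divisibility estimate of §9 of Browning–Heath-Brown: if `p^t` divides all partial
derivatives of the norm form `𝐍_{K/ℚ}` at `s ∈ ℤⁿ`, then `p^{⌈tn/(n−1)⌉}` divides
`D²·𝐍_{K/ℚ}(s)`, where `D²` is the discriminant of `K`. -/
theorem prime_power_divides_discriminant_times_norm
    (K : Type) [Field K] [NumberField K]
    (n : ℕ) (hn2 : 2 ≤ n) (hn : Module.finrank ℚ K = n)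
    (b : Module.Basis (Fin n) ℤ (𝓞 K))
    (Nf : MvPolynomial (Fin n) ℤ)
    (hNf : ∀ s : Fin n → ℤ,
      MvPolynomial.eval s Nf = Algebra.norm ℤ (∑ i, s i • b i))
    (p : ℕ) (hp : p.Prime) (t : ℕ) (s : Fin n → ℤ)
    (hdiv : ∀ j, (p : ℤ) ^ t ∣ MvPolynomial.eval s (MvPolynomial.pderiv j Nf)) :
    (p : ℤ) ^ (⌈(t * n : ℚ) / ((n : ℚ) - 1)⌉₊)
      ∣ NumberField.discr K * MvPolynomial.eval s Nf :=
  prime_power_divides_discriminant_times_norm_general K n hn b Nf hNf p hp t s hdiv
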